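/- If φ is a multiplier of the product Bloch space B(D^n) with n ≥ 2, then for each fixed w ∈ D, the slice function z ↦ φ(z, w) is a multiplier of B(D^{n-1}), with multiplier norm bounded by C·‖M_φ‖ uniformly in w. -/

import Mathlib

/-!
Test the multiplier on `f(z, ζ) = g(z) · m_w(ζ)`, where `m_w` is the Möbius automorphism of the
disc sending `w` to `0`. On the slice `ζ = w` the mixed derivative of `φ f` is `m_w'(w)` times
that of `φ(·, w) g`, and `(1 - |w|²) |m_w'(w)| = 1`; by Schwarz–Pick `f` has Bloch bound `2‖g‖`.
This bounds the derivative part of `φ(·, w) g` by `2A‖g‖`. The constant term `|φ(0, w) g(0)|` is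
the derivative part at `0` of `φ(·, w) γ` with `γ(z) = g(0) z₁ ⋯ zₙ`, which is bounded the same way.
-/

/-- The open unit polydisc in `ℂⁿ`. -/
def polydisc (n : ℕ) : Set (Fin n → ℂ) := {z | ∀ j, ‖z j‖ < 1}

/-- Partial (complex) derivative in the `j`-th variable. -/
noncomputable def pderivAt (n : ℕ) (j : Fin n) (f : (Fin n → ℂ) → ℂ) :
    (Fin n → ℂ) → ℂ :=
  fun z => deriv (fun w : ℂ => f (Function.update z j w)) (z j)

/-- Iterated mixed partial derivative, once in each variable of the list. -/
noncomputable def mderiv (n : ℕ) : List (Fin n) → ((Fin n → ℂ) → ℂ) → ((Fin n → ℂ) → ℂ)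
  | [], f => f
  | j :: l, f => pderivAt n j (mderiv n l f)

/-- The product-Bloch quantity `|f(0)| + ∏ⱼ(1-|zⱼ|²)·|∂ⁿf/∂z₁⋯∂zₙ(z)|`. -/
noncomputable def prodBlochExpr (n : ℕ) (f : (Fin n → ℂ) → ℂ) (z : Fin n → ℂ) : ℝ :=
  ‖f 0‖ +
    (∏ j, (1 - ‖z j‖ ^ 2)) * ‖mderiv n (List.finRange n) f z‖

/-- The sum-Bloch quantity `|f(0)| + Σⱼ(1-|zⱼ|²)·|∂f/∂zⱼ(z)|`. -/
noncomputable def sumBlochExpr (n : ℕ) (f : (Fin n → ℂ) → ℂ) (z : Fin n → ℂ) : ℝ :=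
  ‖f 0‖ +
    ∑ j, (1 - ‖z j‖ ^ 2) * ‖pderivAt n j f z‖

section Polydisc

variable {n : ℕ}

theorem isOpen_polydisc (n : ℕ) : IsOpen (polydisc n) := by
  simpa only [polydisc, Set.ofPred_forall] using
    isOpen_iInter_of_finite fun j => isOpen_lt (continuous_apply j).norm continuous_const

theorem zero_mem_polydisc (n : ℕ) : (0 : Fin n → ℂ) ∈ polydisc n := by
  simp [polydisc]

theorem init_mem_polydisc {y : Fin (n + 1) → ℂ} (hy : y ∈ polydisc (n + 1)) :
    Fin.init y ∈ polydisc n :=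
  fun j => hy j.castSucc

theorem snoc_mem_polydisc {z : Fin n → ℂ} {w : ℂ} (hz : z ∈ polydisc n) (hw : ‖w‖ < 1) :
    (Fin.snoc z w : Fin (n + 1) → ℂ) ∈ polydisc (n + 1) :=
  Fin.lastCases (by simpa using hw) (fun j => by simpa using hz j)

theorem prod_one_sub_norm_sq_nonneg {z : Fin n → ℂ} (hz : z ∈ polydisc n) :
    0 ≤ ∏ j, (1 - ‖z j‖ ^ 2) :=
  Finset.prod_nonneg fun j _ => by nlinarith [hz j, norm_nonneg (z j)]

theorem prod_one_sub_norm_sq_le_one {z : Fin n → ℂ} (hz : z ∈ polydisc n) :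
    ∏ j, (1 - ‖z j‖ ^ 2) ≤ 1 :=
  Finset.prod_le_one (fun j _ => by nlinarith [hz j, norm_nonneg (z j)])
    fun j _ => by nlinarith [norm_nonneg (z j)]

theorem prod_one_sub_norm_sq_snoc (z : Fin n → ℂ) (w : ℂ) :
    ∏ j, (1 - ‖(Fin.snoc z w : Fin (n + 1) → ℂ) j‖ ^ 2)
      = (∏ j, (1 - ‖z j‖ ^ 2)) * (1 - ‖w‖ ^ 2) := by
  simp [Fin.prod_univ_castSucc]

theorem differentiable_snoc (w : ℂ) :
    Differentiable ℂ (fun z : Fin n → ℂ => (Fin.snoc z w : Fin (n + 1) → ℂ)) :=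
  differentiable_pi.mpr <| Fin.lastCases (by simp) fun j => by simp [differentiable_apply j]

theorem differentiable_snoc_right (z : Fin n → ℂ) :
    Differentiable ℂ (fun w : ℂ => (Fin.snoc z w : Fin (n + 1) → ℂ)) :=
  differentiable_pi.mpr <| Fin.lastCases (by simp) fun j => by simp

theorem DifferentiableOn.comp_snoc {φ : (Fin (n + 1) → ℂ) → ℂ}
    (hφ : DifferentiableOn ℂ φ (polydisc (n + 1))) {w : ℂ} (hw : ‖w‖ < 1) :
    DifferentiableOn ℂ (fun z => φ (Fin.snoc z w)) (polydisc n) :=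
  hφ.comp (differentiable_snoc w).differentiableOn fun _ hz => snoc_mem_polydisc hz hw

end Polydisc

section MixedDerivative

variable {n : ℕ}

theorem mderiv_append (l₁ l₂ : List (Fin n)) (F : (Fin n → ℂ) → ℂ) :
    mderiv n (l₁ ++ l₂) F = mderiv n l₁ (mderiv n l₂ F) := by
  induction l₁ with
  | nil => rfl
  | cons j l ih => simp only [List.cons_append, mderiv, ih]

theorem mderiv_const_mul (c : ℂ) (l : List (Fin n)) (F : (Fin n → ℂ) → ℂ) (z : Fin n → ℂ) :
    mderiv n l (fun z => c * F z) z = c * mderiv n l F z := by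
  induction l generalizing z with
  | nil => rfl
  | cons j l ih => simp only [mderiv, pderivAt, ih, deriv_const_mul_field]

theorem mderiv_congr {U : Set (Fin n → ℂ)} (hU : IsOpen U) {F G : (Fin n → ℂ) → ℂ}
    (h : Set.EqOn F G U) (l : List (Fin n)) : Set.EqOn (mderiv n l F) (mderiv n l G) U := by
  induction l with
  | nil => exact h
  | cons j l ih =>
    intro z hz
    refine Filter.EventuallyEq.deriv_eq ?_
    have hcont : Continuous (Function.update z j) := by fun_prop
    have hnhds : Function.update z j ⁻¹' U ∈ nhds (z j) :=
      (hU.preimage hcont).mem_nhds (by simpa using hz)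
    filter_upwards [hnhds] with u hu using ih hu

theorem pderivAt_last_snoc (F : (Fin (n + 1) → ℂ) → ℂ) (z : Fin n → ℂ) (w : ℂ) :
    pderivAt (n + 1) (Fin.last n) F (Fin.snoc z w) = deriv (fun u => F (Fin.snoc z u)) w := by
  simp only [pderivAt, Fin.snoc_last, Fin.update_snoc_last]

theorem mderiv_map_castSucc_snoc (w : ℂ) (l : List (Fin n)) (F : (Fin (n + 1) → ℂ) → ℂ)
    (z : Fin n → ℂ) :
    mderiv (n + 1) (l.map Fin.castSucc) F (Fin.snoc z w)
      = mderiv n l (fun z' => F (Fin.snoc z' w)) z := by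
  induction l generalizing z with
  | nil => rfl
  | cons j l ih =>
    simp only [List.map_cons, mderiv, pderivAt, Fin.snoc_castSucc, ← Fin.snoc_update, ih]

theorem mderiv_finRange_succ_snoc (F : (Fin (n + 1) → ℂ) → ℂ) (z : Fin n → ℂ) (w : ℂ) :
    mderiv (n + 1) (List.finRange (n + 1)) F (Fin.snoc z w)
      = mderiv n (List.finRange n) (fun z' => deriv (fun u => F (Fin.snoc z' u)) w) z := by
  rw [List.finRange_succ_last, mderiv_append, mderiv_map_castSucc_snoc]
  simp only [mderiv, pderivAt_last_snoc]

end MixedDerivative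

section SeparatedProduct

variable {n : ℕ}

theorem mderiv_comp_init_mul_comp_last (γ : (Fin n → ℂ) → ℂ) (h : ℂ → ℂ) (y : Fin (n + 1) → ℂ) :
    mderiv (n + 1) (List.finRange (n + 1)) (fun x => γ (Fin.init x) * h (x (Fin.last n))) y
      = deriv h (y (Fin.last n)) * mderiv n (List.finRange n) γ (Fin.init y) := by
  rw [← Fin.snoc_init_self y, mderiv_finRange_succ_snoc]
  simp only [Fin.init_snoc, Fin.snoc_last, deriv_const_mul_field, mul_comm _ (deriv h _),
    mderiv_const_mul]

/-- Product rule in the last variable: on the slice `{x_last = w}` the term carrying `h w = 0`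
drops out. -/
theorem mderiv_mul_comp_init_mul_comp_last_snoc {φ : (Fin (n + 1) → ℂ) → ℂ}
    (hφ : DifferentiableOn ℂ φ (polydisc (n + 1))) (γ : (Fin n → ℂ) → ℂ) {h : ℂ → ℂ}
    (hh : DifferentiableOn ℂ h (Metric.ball 0 1)) {w : ℂ} (hw : ‖w‖ < 1) (hhw : h w = 0)
    {z : Fin n → ℂ} (hz : z ∈ polydisc n) :
    mderiv (n + 1) (List.finRange (n + 1)) (φ * fun x => γ (Fin.init x) * h (x (Fin.last n)))
        (Fin.snoc z w)
      = deriv h w * mderiv n (List.finRange n) ((fun z' => φ (Fin.snoc z' w)) * γ) z := by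
  have hslice : Set.EqOn
      (fun z' => deriv (fun u => ((φ * fun x => γ (Fin.init x) * h (x (Fin.last n)) :
        (Fin (n + 1) → ℂ) → ℂ)) (Fin.snoc z' u)) w)
      (fun z' => deriv h w * ((fun z' => φ (Fin.snoc z' w)) * γ) z') (polydisc n) := by
    intro z' hz'
    have hφw : DifferentiableAt ℂ (fun u => φ (Fin.snoc z' u)) w :=
      (hφ.differentiableAt ((isOpen_polydisc _).mem_nhds (snoc_mem_polydisc hz' hw))).comp w
        (differentiable_snoc_right z' w)
    have hhw' : DifferentiableAt ℂ h w :=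
      hh.differentiableAt (Metric.isOpen_ball.mem_nhds (by simpa using hw))
    simp only [Pi.mul_apply, Fin.init_snoc, Fin.snoc_last]
    rw [(hφw.hasDerivAt.fun_mul (hhw'.hasDerivAt.const_mul (γ z'))).deriv, hhw]
    ring
  rw [mderiv_finRange_succ_snoc, mderiv_congr (isOpen_polydisc n) hslice _ hz, mderiv_const_mul]

theorem mderiv_prod_apply (z : Fin n → ℂ) :
    mderiv n (List.finRange n) (fun z => ∏ j, z j) z = 1 := by
  induction n with
  | zero => simp [mderiv]
  | succ n ih =>
    have hsplit : (fun x : Fin (n + 1) → ℂ => ∏ j, x j)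
        = fun x => (∏ j, Fin.init x j) * id (x (Fin.last n)) := by
      ext x
      simp only [Fin.prod_univ_castSucc, id, Fin.init]
    rw [hsplit, mderiv_comp_init_mul_comp_last, ih, deriv_id, one_mul]

theorem mderiv_prod_mul_apply_zero {χ : (Fin n → ℂ) → ℂ} (hχ : DifferentiableOn ℂ χ (polydisc n)) :
    mderiv n (List.finRange n) (fun z => (∏ j, z j) * χ z) 0 = χ 0 := by
  induction n with
  | zero => simp [mderiv]
  | succ n ih =>
    have hzero : (Fin.snoc 0 0 : Fin (n + 1) → ℂ) = 0 := by
      ext j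
      induction j using Fin.lastCases <;> simp
    have hsplit : (fun x : Fin (n + 1) → ℂ => (∏ j, x j) * χ x)
        = χ * fun x => (∏ j, Fin.init x j) * id (x (Fin.last n)) := by
      ext x
      simp only [Fin.prod_univ_castSucc, Pi.mul_apply, id, Fin.init]
      ring
    have hcomm : (fun z => χ (Fin.snoc z 0)) * (fun z => ∏ j, z j)
        = fun z => (∏ j, z j) * χ (Fin.snoc z 0) :=
      funext fun z => mul_comm _ _
    rw [hsplit, ← hzero, mderiv_mul_comp_init_mul_comp_last_snoc hχ _ differentiableOn_id
      (by simp) rfl (zero_mem_polydisc n), deriv_id, one_mul, hcomm, ih (hχ.comp_snoc (by simp)),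
      hzero]

end SeparatedProduct

section Mobius

open ComplexConjugate

noncomputable def mobius (w ζ : ℂ) : ℂ := (ζ - w) / (1 - conj w * ζ)

variable {w ζ : ℂ}

theorem mobius_self (w : ℂ) : mobius w w = 0 := by simp [mobius]

theorem norm_mobius_zero (w : ℂ) : ‖mobius w 0‖ = ‖w‖ := by simp [mobius]

theorem norm_one_sub_conj_mul_sq (w ζ : ℂ) :
    ‖1 - conj w * ζ‖ ^ 2 = ‖ζ - w‖ ^ 2 + (1 - ‖w‖ ^ 2) * (1 - ‖ζ‖ ^ 2) := by
  simp only [Complex.sq_norm, Complex.normSq_apply, Complex.sub_re, Complex.sub_im,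
    Complex.mul_re, Complex.mul_im, Complex.conj_re, Complex.conj_im, Complex.one_re,
    Complex.one_im]
  ring

theorem one_sub_conj_mul_ne_zero (hw : ‖w‖ < 1) (hζ : ‖ζ‖ < 1) : 1 - conj w * ζ ≠ 0 := by
  intro h
  have := norm_one_sub_conj_mul_sq w ζ
  rw [h, norm_zero] at this
  nlinarith [mul_pos (by nlinarith [norm_nonneg w] : 0 < 1 - ‖w‖ ^ 2)
    (by nlinarith [norm_nonneg ζ] : 0 < 1 - ‖ζ‖ ^ 2), sq_nonneg ‖ζ - w‖]

theorem hasDerivAt_mobius (hw : ‖w‖ < 1) (hζ : ‖ζ‖ < 1) :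
    HasDerivAt (mobius w) (((1 - ‖w‖ ^ 2 : ℝ) : ℂ) / (1 - conj w * ζ) ^ 2) ζ := by
  have hden := one_sub_conj_mul_ne_zero hw hζ
  refine (((hasDerivAt_id' ζ).sub_const w).fun_div
    (((hasDerivAt_id' ζ).const_mul (conj w)).const_sub 1) hden).congr_deriv ?_
  push_cast
  rw [← Complex.conj_mul']
  field_simp
  ring

theorem differentiableOn_mobius (hw : ‖w‖ < 1) : DifferentiableOn ℂ (mobius w) (Metric.ball 0 1) :=
  fun _ hζ => (hasDerivAt_mobius hw (by simpa using hζ)).differentiableAt.differentiableWithinAt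

theorem one_sub_sq_mul_norm_deriv_mobius (hw : ‖w‖ < 1) (hζ : ‖ζ‖ < 1) :
    (1 - ‖ζ‖ ^ 2) * ‖deriv (mobius w) ζ‖ = 1 - ‖mobius w ζ‖ ^ 2 := by
  have hden := norm_pos_iff.mpr (one_sub_conj_mul_ne_zero hw hζ)
  have hw2 : 0 ≤ 1 - ‖w‖ ^ 2 := by nlinarith [norm_nonneg w]
  rw [(hasDerivAt_mobius hw hζ).deriv, mobius, norm_div, norm_div, norm_pow, Complex.norm_real,
    Real.norm_of_nonneg hw2, div_pow]
  field_simp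
  linear_combination -norm_one_sub_conj_mul_sq w ζ

end Mobius

section ProdBloch

variable {n : ℕ}

noncomputable def prodBlochDerivTerm (n : ℕ) (f : (Fin n → ℂ) → ℂ) (z : Fin n → ℂ) : ℝ :=
  (∏ j, (1 - ‖z j‖ ^ 2)) * ‖mderiv n (List.finRange n) f z‖

theorem prodBlochExpr_eq_add (f : (Fin n → ℂ) → ℂ) (z : Fin n → ℂ) :
    prodBlochExpr n f z = ‖f 0‖ + prodBlochDerivTerm n f z :=
  rfl

theorem prodBlochDerivTerm_nonneg (f : (Fin n → ℂ) → ℂ) {z : Fin n → ℂ} (hz : z ∈ polydisc n) :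
    0 ≤ prodBlochDerivTerm n f z :=
  mul_nonneg (prod_one_sub_norm_sq_nonneg hz) (norm_nonneg _)

theorem prodBlochDerivTerm_comp_init_mul_comp_last (γ : (Fin n → ℂ) → ℂ) (h : ℂ → ℂ)
    (y : Fin (n + 1) → ℂ) :
    prodBlochDerivTerm (n + 1) (fun x => γ (Fin.init x) * h (x (Fin.last n))) y
      = prodBlochDerivTerm n γ (Fin.init y)
        * ((1 - ‖y (Fin.last n)‖ ^ 2) * ‖deriv h (y (Fin.last n))‖) := by
  simp only [prodBlochDerivTerm, mderiv_comp_init_mul_comp_last, Fin.prod_univ_castSucc, norm_mul,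
    Fin.init]
  ring

theorem DifferentiableOn.comp_init_mul_comp_last {γ : (Fin n → ℂ) → ℂ}
    (hγ : DifferentiableOn ℂ γ (polydisc n)) {h : ℂ → ℂ}
    (hh : DifferentiableOn ℂ h (Metric.ball 0 1)) :
    DifferentiableOn ℂ (fun x => γ (Fin.init x) * h (x (Fin.last n))) (polydisc (n + 1)) := by
  have hinit : Differentiable ℂ (fun x : Fin (n + 1) → ℂ => Fin.init x) :=
    differentiable_pi.mpr fun j => differentiable_apply _
  refine (hγ.comp hinit.differentiableOn fun _ hy => init_mem_polydisc hy).mul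
    (hh.comp (differentiable_apply _).differentiableOn fun y hy => ?_)
  simpa using hy (Fin.last n)

theorem prodBlochExpr_comp_init_mul_mobius_le {w : ℂ} (hw : ‖w‖ < 1) {γ : (Fin n → ℂ) → ℂ}
    {K : ℝ} (h0 : ‖γ 0‖ ≤ K) (hd : ∀ z ∈ polydisc n, prodBlochDerivTerm n γ z ≤ K)
    {y : Fin (n + 1) → ℂ} (hy : y ∈ polydisc (n + 1)) :
    prodBlochExpr (n + 1) (fun x => γ (Fin.init x) * mobius w (x (Fin.last n))) y ≤ 2 * K := by
  rw [prodBlochExpr_eq_add, prodBlochDerivTerm_comp_init_mul_comp_last,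
    one_sub_sq_mul_norm_deriv_mobius hw (hy _)]
  have hconst :
      ‖γ (Fin.init (0 : Fin (n + 1) → ℂ)) * mobius w ((0 : Fin (n + 1) → ℂ) (Fin.last n))‖ ≤ K := by
    rw [norm_mul, Pi.zero_apply, norm_mobius_zero]
    exact (mul_le_of_le_one_right (norm_nonneg _) hw.le).trans h0
  have hderiv : prodBlochDerivTerm n γ (Fin.init y) * (1 - ‖mobius w (y (Fin.last n))‖ ^ 2) ≤ K :=
    (mul_le_of_le_one_right (prodBlochDerivTerm_nonneg γ (init_mem_polydisc hy))
      (by nlinarith [norm_nonneg (mobius w (y (Fin.last n)))])).trans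
      (hd _ (init_mem_polydisc hy))
  linarith

/-- `φ` is a multiplier of `B(Dⁿ)` with `‖M_φ‖ ≤ A`. -/
def IsProdBlochMultiplierWith (n : ℕ) (A : ℝ) (φ : (Fin n → ℂ) → ℂ) : Prop :=
  ∀ f : (Fin n → ℂ) → ℂ, DifferentiableOn ℂ f (polydisc n) →
    ∀ B : ℝ, (∀ z ∈ polydisc n, prodBlochExpr n f z ≤ B) →
      ∀ z ∈ polydisc n, prodBlochExpr n (φ * f) z ≤ A * B

variable {φ : (Fin (n + 1) → ℂ) → ℂ} {A : ℝ} {w : ℂ}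

theorem IsProdBlochMultiplierWith.prodBlochDerivTerm_slice_mul_le
    (hmult : IsProdBlochMultiplierWith (n + 1) A φ) (hφ : DifferentiableOn ℂ φ (polydisc (n + 1)))
    (hw : ‖w‖ < 1) {γ : (Fin n → ℂ) → ℂ} (hγ : DifferentiableOn ℂ γ (polydisc n)) {K : ℝ}
    (h0 : ‖γ 0‖ ≤ K) (hd : ∀ z ∈ polydisc n, prodBlochDerivTerm n γ z ≤ K)
    {z : Fin n → ℂ} (hz : z ∈ polydisc n) :
    prodBlochDerivTerm n ((fun z => φ (Fin.snoc z w)) * γ) z ≤ A * (2 * K) := by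
  have htest := hmult _ (hγ.comp_init_mul_comp_last (differentiableOn_mobius hw)) (2 * K)
    (fun y hy => prodBlochExpr_comp_init_mul_mobius_le hw h0 hd hy) _ (snoc_mem_polydisc hz hw)
  have hunit : (1 - ‖w‖ ^ 2) * ‖deriv (mobius w) w‖ = 1 := by
    simp [one_sub_sq_mul_norm_deriv_mobius hw hw, mobius_self]
  have hslice : prodBlochDerivTerm (n + 1)
      (φ * fun x => γ (Fin.init x) * mobius w (x (Fin.last n))) (Fin.snoc z w)
      = prodBlochDerivTerm n ((fun z => φ (Fin.snoc z w)) * γ) z := by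
    rw [prodBlochDerivTerm, prodBlochDerivTerm, prod_one_sub_norm_sq_snoc,
      mderiv_mul_comp_init_mul_comp_last_snoc hφ γ (differentiableOn_mobius hw) hw (mobius_self w)
        hz, norm_mul]
    linear_combination (∏ j, (1 - ‖z j‖ ^ 2))
      * ‖mderiv n (List.finRange n) ((fun z => φ (Fin.snoc z w)) * γ) z‖ * hunit
  rw [prodBlochExpr_eq_add, hslice] at htest
  exact (le_add_of_nonneg_left (norm_nonneg _)).trans htest

theorem IsProdBlochMultiplierWith.slice (hmult : IsProdBlochMultiplierWith (n + 1) A φ)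
    (hφ : DifferentiableOn ℂ φ (polydisc (n + 1))) (hw : ‖w‖ < 1) :
    IsProdBlochMultiplierWith n (4 * A) (fun z => φ (Fin.snoc z w)) := by
  intro g hg B hgB z hz
  have hg0 : ‖g 0‖ ≤ B := (le_add_of_nonneg_right (prodBlochDerivTerm_nonneg g
    (zero_mem_polydisc n))).trans (hgB 0 (zero_mem_polydisc n))
  have hgd : ∀ z ∈ polydisc n, prodBlochDerivTerm n g z ≤ B :=
    fun z hz => (le_add_of_nonneg_left (norm_nonneg _)).trans (hgB z hz)
  set γ : (Fin n → ℂ) → ℂ := fun z => g 0 * ∏ j, z j with hγ_def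
  have hγ : DifferentiableOn ℂ γ (polydisc n) := by fun_prop
  have hγ0 : ‖γ 0‖ ≤ B := by
    rw [hγ_def, norm_mul, norm_prod]
    exact (mul_le_of_le_one_right (norm_nonneg _)
      (Finset.prod_le_one (fun _ _ => norm_nonneg _) fun j _ => by simp)).trans hg0
  have hγd : ∀ z ∈ polydisc n, prodBlochDerivTerm n γ z ≤ B := fun z hz => by
    rw [prodBlochDerivTerm, hγ_def, mderiv_const_mul, mderiv_prod_apply, mul_one]
    exact (mul_le_of_le_one_left (norm_nonneg _) (prod_one_sub_norm_sq_le_one hz)).trans hg0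
  have hconst : ‖φ (Fin.snoc 0 w) * g 0‖
      = prodBlochDerivTerm n ((fun z => φ (Fin.snoc z w)) * γ) 0 := by
    have hprod : (fun z => φ (Fin.snoc z w)) * γ = fun z => (∏ j, z j) * (g 0 * φ (Fin.snoc z w)) :=
      funext fun z => by simp only [Pi.mul_apply, hγ_def]; ring
    rw [prodBlochDerivTerm, hprod, mderiv_prod_mul_apply_zero ((hφ.comp_snoc hw).const_mul _)]
    simp [mul_comm]
  rw [prodBlochExpr_eq_add, Pi.mul_apply, hconst]
  linear_combination hmult.prodBlochDerivTerm_slice_mul_le hφ hw hγ hγ0 hγd (zero_mem_polydisc n)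
    + hmult.prodBlochDerivTerm_slice_mul_le hφ hw hg hg0 hgd hz

end ProdBloch

theorem prod_bloch_multiplier_slice_general (n : ℕ) :
    ∃ C : ℝ, 0 < C ∧
      ∀ φ : (Fin (n + 1) → ℂ) → ℂ, DifferentiableOn ℂ φ (polydisc (n + 1)) →
        ∀ A : ℝ,
          (∀ f : (Fin (n + 1) → ℂ) → ℂ, DifferentiableOn ℂ f (polydisc (n + 1)) →
            ∀ B : ℝ, (∀ z ∈ polydisc (n + 1), prodBlochExpr (n + 1) f z ≤ B) →
              ∀ z ∈ polydisc (n + 1), prodBlochExpr (n + 1) (φ * f) z ≤ A * B) →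
          ∀ w : ℂ, ‖w‖ < 1 →
            ∀ g : (Fin n → ℂ) → ℂ, DifferentiableOn ℂ g (polydisc n) →
              ∀ B : ℝ, (∀ z ∈ polydisc n, prodBlochExpr n g z ≤ B) →
                ∀ z ∈ polydisc n,
                  prodBlochExpr n ((fun z : Fin n → ℂ => φ (Fin.snoc z w)) * g) z
                    ≤ C * A * B :=
  ⟨4, by norm_num, fun _ hφ _ hmult _ hw => IsProdBlochMultiplierWith.slice hmult hφ hw⟩

/-- If `φ` multiplies `B(Dⁿ⁺¹)` (with `n+1 ≥ 2`), then every slice `φ(·, w)`, `w ∈ D`,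
multiplies `B(Dⁿ)`, with multiplier norm `≤ C·‖M_φ‖` uniformly in `w`. -/
theorem prod_bloch_multiplier_slice (n : ℕ) (hn : 1 ≤ n) :
    ∃ C : ℝ, 0 < C ∧
      ∀ φ : (Fin (n + 1) → ℂ) → ℂ, DifferentiableOn ℂ φ (polydisc (n + 1)) →
        ∀ A : ℝ,
          (∀ f : (Fin (n + 1) → ℂ) → ℂ, DifferentiableOn ℂ f (polydisc (n + 1)) →
            ∀ B : ℝ, (∀ z ∈ polydisc (n + 1), prodBlochExpr (n + 1) f z ≤ B) →
              ∀ z ∈ polydisc (n + 1), prodBlochExpr (n + 1) (φ * f) z ≤ A * B) →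
          ∀ w : ℂ, ‖w‖ < 1 →
            ∀ g : (Fin n → ℂ) → ℂ, DifferentiableOn ℂ g (polydisc n) →
              ∀ B : ℝ, (∀ z ∈ polydisc n, prodBlochExpr n g z ≤ B) →
                ∀ z ∈ polydisc n,
                  prodBlochExpr n ((fun z : Fin n → ℂ => φ (Fin.snoc z w)) * g) z
                    ≤ C * A * B :=
  prod_bloch_multiplier_slice_general n
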